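/- arXiv:1512.05136 — 4 statements merged into one kernel-verified Lean document; each statement's English description precedes it below -/
import Mathlib

section
/- Let n ≥ 1 be an integer, T₀ ≥ 0, and t a real number with 0 ≤ t < (T₀+1)/n. Then for every z ∈ ℂⁿ with z ≠ 0, the n×n complex matrix G(t,z) with entries G_{ij} = ((1+T₀−nt)δ_{ij} − (T₀−nt)·conj(z^i)·z^j/|z|²)/|z|² is Hermitian positive definite. -/
open Finset ComplexConjugate
open scoped ComplexOrder

/-- `|z|² = Σₘ |zᵐ|²` for `z ∈ ℂⁿ`. -/
noncomputable def zsq {n : ℕ} (z : Fin n → ℂ) : ℝ := ∑ m, Complex.normSq (z m)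

/-- The coefficient matrix `G(t,z)` of the Chern-Ricci flow solution `ω(t) = ω₀ − t Ric(ω₀)`:
`G_{ij} = ((1+T₀−nt)δ_{ij} − (T₀−nt)·conj(zⁱ)·zʲ/|z|²)/|z|²`. -/
noncomputable def Gmat (n : ℕ) (T₀ t : ℝ) (z : Fin n → ℂ) : Matrix (Fin n) (Fin n) ℂ :=
  Matrix.of fun i j =>
    (((1 + T₀ - n * t : ℝ) : ℂ) * (if i = j then 1 else 0)
      - ((T₀ - n * t : ℝ) : ℂ) * conj (z i) * z j / ((zsq z : ℝ) : ℂ)) / ((zsq z : ℝ) : ℂ)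

/-- Cauchy–Schwarz in coordinates. -/
theorem zsq_cauchy_schwarz (n : ℕ) (z x : Fin n → ℂ) :
    Complex.normSq (∑ i, z i * x i) ≤ (∑ i, Complex.normSq (z i)) * (∑ i, Complex.normSq (x i)) := by
  have h := norm_inner_le_norm (𝕜 := ℂ) (E := EuclideanSpace ℂ (Fin n))
    ((WithLp.equiv 2 _).symm fun i => conj (z i)) ((WithLp.equiv 2 _).symm x)
  rw [PiLp.inner_apply] at h
  simp only [WithLp.equiv_symm_apply, PiLp.toLp_apply, RCLike.inner_apply, starRingEnd_self_apply] at h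
  have h2 : ‖∑ i, z i * x i‖ ^ 2
      ≤ (‖(WithLp.equiv 2 (Fin n → ℂ)).symm fun i => conj (z i)‖
          * ‖(WithLp.equiv 2 (Fin n → ℂ)).symm x‖) ^ 2 :=
    pow_le_pow_left₀ (norm_nonneg _) (by rw [mul_comm (‖_‖)]; simpa only [mul_comm, WithLp.equiv_symm_apply] using h) 2
  rw [mul_pow, EuclideanSpace.norm_eq, EuclideanSpace.norm_eq,
    Real.sq_sqrt (by positivity), Real.sq_sqrt (by positivity)] at h2
  calc Complex.normSq (∑ i, z i * x i) = ‖∑ i, z i * x i‖ ^ 2 := by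
        rw [Complex.normSq_eq_norm_sq]
    _ ≤ _ := h2.trans_eq (by
        congr 1 <;> apply Finset.sum_congr rfl <;> intro i _ <;>
          simp [WithLp.equiv_symm_apply, PiLp.toLp_apply, Complex.sq_norm])

/-- Positivity of `zsq` for nonzero vectors. -/
theorem zsq_pos {n : ℕ} {z : Fin n → ℂ} (hz : z ≠ 0) : 0 < zsq z := by
  obtain ⟨m, hm⟩ := Function.ne_iff.mp hz
  exact Finset.sum_pos' (fun i _ => Complex.normSq_nonneg _)
    ⟨m, Finset.mem_univ m, Complex.normSq_pos.mpr hm⟩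

/-- The quadratic form of `Gmat`. -/
theorem Gmat_quadForm (n : ℕ) (T₀ t : ℝ) (z x : Fin n → ℂ) :
    dotProduct (star x) ((Gmat n T₀ t z).mulVec x)
      = (((1 + T₀ - n * t : ℝ) : ℂ) * ((zsq x : ℝ) : ℂ)
          - ((T₀ - n * t : ℝ) : ℂ) * ((Complex.normSq (∑ i, z i * x i) : ℝ) : ℂ)
            / ((zsq z : ℝ) : ℂ))
        / ((zsq z : ℝ) : ℂ) := by
  set a := ((1 + T₀ - n * t : ℝ) : ℂ)
  set b := ((T₀ - n * t : ℝ) : ℂ)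
  set s := ((zsq z : ℝ) : ℂ)
  have inner : ∀ i, (Gmat n T₀ t z).mulVec x i
      = (a * x i - b * conj (z i) * (∑ j, z j * x j) / s) / s := by
    intro i
    simp only [Gmat, Matrix.mulVec, dotProduct, Matrix.of_apply]
    rw [show (∑ j, ((a * (if i = j then 1 else 0) - b * conj (z i) * z j / s) / s) * x j)
        = ∑ j, (a * (if i = j then x j else 0) / s - b * conj (z i) * (z j * x j) / s / s) from
      Finset.sum_congr rfl fun j _ => by by_cases h : i = j <;> simp [h] <;> ring]
    rw [Finset.sum_sub_distrib, ← Finset.sum_div, ← Finset.mul_sum,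
      Finset.sum_ite_eq, if_pos (Finset.mem_univ i)]
    rw [show (∑ j, b * conj (z i) * (z j * x j) / s / s)
        = b * conj (z i) * (∑ j, z j * x j) / s / s by
      rw [← Finset.sum_div, ← Finset.sum_div, Finset.mul_sum]]
    ring
  calc dotProduct (star x) ((Gmat n T₀ t z).mulVec x)
      = ∑ i, (a * (conj (x i) * x i) / s
          - b * (conj (z i * x i)) * (∑ j, z j * x j) / s / s) := by
        simp only [dotProduct, Pi.star_apply, RCLike.star_def, inner]
        exact Finset.sum_congr rfl fun i _ => by simp only [_root_.map_mul]; ring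
    _ = (a * ((zsq x : ℝ) : ℂ)
          - b * ((Complex.normSq (∑ i, z i * x i) : ℝ) : ℂ) / s) / s := by
        have hx : ∑ i, (conj (x i) * x i) = ((zsq x : ℝ) : ℂ) := by
          rw [zsq, Complex.ofReal_sum]
          exact Finset.sum_congr rfl fun i _ => Complex.normSq_eq_conj_mul_self.symm
        have hz : ∑ i, conj (z i * x i) = conj (∑ i, z i * x i) := (map_sum _ _ _).symm
        have hN : conj (∑ i, z i * x i) * (∑ i, z i * x i)
            = ((Complex.normSq (∑ i, z i * x i) : ℝ) : ℂ) :=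
          Complex.normSq_eq_conj_mul_self.symm
        calc ∑ i, (a * (conj (x i) * x i) / s
              - b * (conj (z i * x i)) * (∑ j, z j * x j) / s / s)
            = a * (∑ i, conj (x i) * x i) / s
              - b * ((∑ i, conj (z i * x i)) * (∑ j, z j * x j)) / s / s := by
              rw [Finset.sum_sub_distrib]
              congr 1
              · rw [← Finset.sum_div, ← Finset.mul_sum]
              · rw [← Finset.sum_div, ← Finset.sum_div]
                congr 2
                rw [Finset.sum_mul (f := fun i => conj (z i * x i)), Finset.mul_sum]
                exact Finset.sum_congr rfl fun i _ => by ring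
          _ = _ := by rw [hx, hz, hN]; ring

/-- For `n ≥ 1`, `T₀ ≥ 0` and `0 ≤ t < (T₀+1)/n`, the matrix `G(t,z)` is
Hermitian positive definite for every `z ≠ 0`. -/
theorem flow_metric_posDef (n : ℕ) (hn : 1 ≤ n) (T₀ : ℝ) (hT₀ : 0 ≤ T₀) (t : ℝ)
    (ht0 : 0 ≤ t) (ht1 : t < (T₀ + 1) / n) :
    ∀ z : Fin n → ℂ, z ≠ 0 → (Gmat n T₀ t z).PosDef := by
  intro z hz
  have hnpos : (0 : ℝ) < n := by exact_mod_cast hn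
  have hnt : (n : ℝ) * t < T₀ + 1 := by
    have := (lt_div_iff₀ hnpos).mp ht1
    linarith
  have ha : 0 < 1 + T₀ - n * t := by linarith
  have hs : 0 < zsq z := zsq_pos hz
  rw [Matrix.posDef_iff_dotProduct_mulVec]
  constructor
  · -- Hermitian
    ext i j
    simp only [Matrix.conjTranspose_apply, Gmat, Matrix.of_apply, RCLike.star_def, map_div₀,
      map_sub, _root_.map_mul, Complex.conj_ofReal, Complex.conj_conj, apply_ite (starRingEnd ℂ), map_one, map_zero]
    rw [show ((if j = i then (1 : ℂ) else 0) = if i = j then 1 else 0) by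
      by_cases h : i = j <;> simp [h, eq_comm]]
    ring
  · intro x hx
    have hX : 0 < zsq x := zsq_pos hx
    have hCS : Complex.normSq (∑ i, z i * x i) ≤ zsq z * zsq x := zsq_cauchy_schwarz n z x
    have hN : 0 ≤ Complex.normSq (∑ i, z i * x i) := Complex.normSq_nonneg _
    set N := Complex.normSq (∑ i, z i * x i) with hNdef
    have key : 0 < (1 + T₀ - n * t) * zsq x * zsq z - (T₀ - n * t) * N := by
      nlinarith [mul_pos hX hs,
        mul_nonneg (by linarith : (0:ℝ) ≤ (T₀ - n * t) + 1) (by linarith : (0:ℝ) ≤ zsq z * zsq x - N)]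
    have hreal : 0 < ((1 + T₀ - n * t) * zsq x - (T₀ - n * t) * N / zsq z) / zsq z := by
      have : (1 + T₀ - n * t) * zsq x - (T₀ - n * t) * N / zsq z
          = ((1 + T₀ - n * t) * zsq x * zsq z - (T₀ - n * t) * N) / zsq z := by
        field_simp
      rw [this]
      positivity
    rw [Gmat_quadForm n T₀ t z x]
    rw [show (((1 + T₀ - n * t : ℝ) : ℂ) * ((zsq x : ℝ) : ℂ)
          - ((T₀ - n * t : ℝ) : ℂ) * ((N : ℝ) : ℂ) / ((zsq z : ℝ) : ℂ)) / ((zsq z : ℝ) : ℂ)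
        = ((((1 + T₀ - n * t) * zsq x - (T₀ - n * t) * N / zsq z) / zsq z : ℝ) : ℂ) by
      push_cast; ring]
    exact_mod_cast hreal
end

section
/- Let n ≥ 2 be an integer, T₀ ≥ 0, and t ≥ (T₀+1)/n. Then for every z ∈ ℂⁿ with z ≠ 0, the matrix G(t,z) with entries G_{ij} = ((1+T₀−nt)δ_{ij} − (T₀−nt)·conj(z^i)·z^j/|z|²)/|z|² is NOT positive definite: there exists ξ ∈ ℂⁿ, ξ ≠ 0, with Σ_{i,j} G_{ij} ξ^i conj(ξ^j) ≤ 0. Hence the maximal existence time of the Chern-Ricci flow with initial metric ω₀ is T_max = (T₀+1)/n. -/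
open Finset ComplexConjugate
open scoped ComplexOrder

/-- For `n ≥ 2`, `T₀ ≥ 0` and `t ≥ (T₀+1)/n`, for every `z ≠ 0` the matrix
`G(t,z)` is not positive definite: there exists `ξ ≠ 0` with
`Σ_{i,j} G_{ij} ξⁱ conj(ξʲ) ≤ 0`.  (Hence the maximal existence time of the Chern-Ricci
flow with initial metric `ω₀` is `T_max = (T₀+1)/n`.) -/
theorem flow_metric_not_posDef (n : ℕ) (hn : 2 ≤ n) (T₀ : ℝ) (hT₀ : 0 ≤ T₀) (t : ℝ)
    (ht : (T₀ + 1) / n ≤ t) :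
    ∀ z : Fin n → ℂ, z ≠ 0 →
      ¬ (Gmat n T₀ t z).PosDef
      ∧ ∃ ξ : Fin n → ℂ, ξ ≠ 0 ∧ ∃ r : ℝ, r ≤ 0 ∧
          (∑ i, ∑ j, Gmat n T₀ t z i j * ξ i * conj (ξ j)) = (r : ℂ) := by
  intro z hz
  -- basic positivity facts
  have hn0 : (0:ℝ) < (n:ℝ) := by positivity
  have hnt : T₀ + 1 ≤ (n:ℝ) * t := by
    have := (div_le_iff₀ hn0).mp ht
    linarith
  have ha : (1 + T₀ - (n:ℝ) * t) ≤ 0 := by linarith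
  -- pick k with z k ≠ 0
  obtain ⟨k, hk⟩ : ∃ k, z k ≠ 0 := by
    by_contra h
    push_neg at h
    exact hz (funext h)
  have hs : 0 < zsq z := by
    have h1 : Complex.normSq (z k) ≤ zsq z :=
      Finset.single_le_sum (f := fun m => Complex.normSq (z m))
        (fun i _ => Complex.normSq_nonneg _) (Finset.mem_univ k)
    have h2 : 0 < Complex.normSq (z k) := Complex.normSq_pos.mpr hk
    linarith
  have hsC : ((zsq z : ℝ) : ℂ) ≠ 0 := by
    exact_mod_cast ne_of_gt hs
  -- pick l ≠ k
  obtain ⟨l, hlk⟩ : ∃ l : Fin n, l ≠ k := by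
    haveI : Nontrivial (Fin n) := Fin.nontrivial_iff_two_le.mpr hn
    exact exists_ne k
  -- the test vector
  set ξ : Fin n → ℂ := fun i => if i = l then conj (z k) else if i = k then -conj (z l) else 0
    with hξdef
  have hξl : ξ l = conj (z k) := by simp [hξdef]
  have hξ0 : ξ ≠ 0 := by
    intro h
    have : ξ l = 0 := by rw [h]; rfl
    rw [hξl] at this
    exact hk (by simpa using congrArg conj this)
  -- orthogonality: ∑ conj (z i) * ξ i = 0
  have horth : (∑ i, conj (z i) * ξ i) = 0 := by
    have hterm : ∀ i, conj (z i) * ξ i =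
        (if i = l then conj (z l) * conj (z k) else 0)
          + (if i = k then -(conj (z k) * conj (z l)) else 0) := by
      intro i
      by_cases h1 : i = l
      · subst h1; simp [hξdef, hlk]
      · by_cases h2 : i = k
        · subst h2; simp [hξdef, h1, mul_comm]
        · simp [hξdef, h1, h2]
    rw [Finset.sum_congr rfl (fun i _ => hterm i), Finset.sum_add_distrib,
      Finset.sum_ite_eq' Finset.univ l (fun _ => conj (z l) * conj (z k)),
      Finset.sum_ite_eq' Finset.univ k (fun _ => -(conj (z k) * conj (z l)))]
    simp [mul_comm]
  have horth' : (∑ j, z j * conj (ξ j)) = 0 := by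
    have : (∑ j, z j * conj (ξ j)) = conj (∑ i, conj (z i) * ξ i) := by
      rw [map_sum]
      exact Finset.sum_congr rfl fun i _ => by simp [mul_comm]
    rw [this, horth, map_zero]
  -- the norm-square of ξ
  set Q : ℝ := ∑ i, Complex.normSq (ξ i) with hQdef
  have hQ0 : 0 ≤ Q := Finset.sum_nonneg fun i _ => Complex.normSq_nonneg _
  -- the key sum computation
  set a : ℂ := ((1 + T₀ - n * t : ℝ) : ℂ) with hadef
  set b : ℂ := ((T₀ - n * t : ℝ) : ℂ) with hbdef
  set sC : ℂ := ((zsq z : ℝ) : ℂ) with hsCdef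
  have hexpand : ∀ i j, Gmat n T₀ t z i j * ξ i * conj (ξ j) =
      (if i = j then a * (ξ i * conj (ξ j)) else 0) / sC
        - (conj (z i) * ξ i) * (z j * conj (ξ j)) * b / sC / sC := by
    intro i j
    by_cases h : i = j <;>
      simp only [Gmat, Matrix.of_apply, h, if_pos, if_true, if_false, ← hadef, ← hbdef, ← hsCdef,
        ite_true, ite_false] <;> ring
  have hsum : (∑ i, ∑ j, Gmat n T₀ t z i j * ξ i * conj (ξ j)) =
      a * (Q : ℂ) / sC := by
    rw [Finset.sum_congr rfl fun i _ => Finset.sum_congr rfl fun j _ => hexpand i j]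
    have h1 : ∀ i, (∑ j, ((if i = j then a * (ξ i * conj (ξ j)) else 0) / sC
        - (conj (z i) * ξ i) * (z j * conj (ξ j)) * b / sC / sC))
        = a * (Complex.normSq (ξ i) : ℂ) / sC
          - (conj (z i) * ξ i) * (∑ j, z j * conj (ξ j)) * b / sC / sC := by
      intro i
      rw [Finset.sum_sub_distrib]
      congr 1
      · rw [← Finset.sum_div, Finset.sum_ite_eq Finset.univ i]
        simp [Complex.mul_conj]
      · rw [← Finset.sum_div, ← Finset.sum_div, ← Finset.sum_mul, ← Finset.mul_sum]
    rw [Finset.sum_congr rfl fun i _ => h1 i]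
    rw [Finset.sum_sub_distrib]
    have h2 : (∑ i, (conj (z i) * ξ i) * (∑ j, z j * conj (ξ j)) * b / sC / sC) = 0 := by
      simp [horth']
    rw [h2, sub_zero, ← Finset.sum_div, ← Finset.mul_sum]
    congr 2
    rw [hQdef]
    push_cast
    rfl
  -- define r
  refine ⟨?_, ξ, hξ0, (1 + T₀ - n * t) * Q / zsq z, ?_, ?_⟩
  · -- not PosDef
    intro hp
    have hx : (fun i => conj (ξ i)) ≠ 0 := by
      intro h
      apply hξ0
      funext i
      have := congrFun h i
      simpa using congrArg conj this
    have hpos := hp.dotProduct_mulVec_pos hx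
    have heq : dotProduct (star fun i => conj (ξ i)) ((Gmat n T₀ t z).mulVec fun i => conj (ξ i))
        = ∑ i, ∑ j, Gmat n T₀ t z i j * ξ i * conj (ξ j) := by
      simp only [dotProduct, Matrix.mulVec, Pi.star_apply, RCLike.star_def, Complex.conj_conj,
        Finset.mul_sum]
      exact Finset.sum_congr rfl fun i _ => Finset.sum_congr rfl fun j _ => by ring
    rw [heq, hsum] at hpos
    have hle : a * (Q : ℂ) / sC ≤ 0 := by
      rw [hadef, hsCdef]
      have : ((1 + T₀ - n * t) * Q / zsq z : ℝ) ≤ 0 := by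
        apply div_nonpos_iff.mpr
        exact Or.inr ⟨mul_nonpos_of_nonpos_of_nonneg ha hQ0, le_of_lt hs⟩
      calc ((1 + T₀ - (n:ℝ) * t : ℝ) : ℂ) * (Q : ℂ) / ((zsq z : ℝ) : ℂ)
          = (((1 + T₀ - n * t) * Q / zsq z : ℝ) : ℂ) := by push_cast; ring
        _ ≤ 0 := by exact_mod_cast this
    exact hle.not_gt hpos
  · apply div_nonpos_iff.mpr
    exact Or.inr ⟨mul_nonpos_of_nonpos_of_nonneg ha hQ0, le_of_lt hs⟩
  · rw [hsum, hadef, hsCdef]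
    push_cast
    ring
end

section
/- Let n ≥ 1 be an integer, z ∈ ℂⁿ with z ≠ 0, λ ∈ ℝ with λ ≠ 1, and fix indices p,k,i ∈ {1,…,n}. Then Σ_{j=1}^n |z|²(δ_{pj} + λ z^p conj(z^j)/((1−λ)|z|²)) · (2λ conj(z^i) conj(z^k) z^j/|z|⁶ − (λ δ_{jk} conj(z^i) + δ_{ij} conj(z^k))/|z|⁴) = λ conj(z^i) conj(z^k) z^p/|z|⁴ − (λ δ_{pk} conj(z^i) + δ_{ip} conj(z^k))/|z|². -/
set_option maxHeartbeats 1000000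


open Finset ComplexConjugate

/-- The contraction `Γᵖ_{ki} = Σⱼ h^{pj̄} ∂h_{ij̄}/∂zᵏ` giving the Chern
connection coefficients of `ω_λ`: for `z ≠ 0`, `λ ≠ 1` and indices `p, k, i`,
`Σⱼ |z|²(δ_{pj} + λ zᵖ z̄ʲ/((1−λ)|z|²)) · (2λ z̄ⁱ z̄ᵏ zʲ/|z|⁶ − (λ δ_{jk} z̄ⁱ + δ_{ij} z̄ᵏ)/|z|⁴)`
`= λ z̄ⁱ z̄ᵏ zᵖ/|z|⁴ − (λ δ_{pk} z̄ⁱ + δ_{ip} z̄ᵏ)/|z|²`. -/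
theorem chern_connection_coeff (n : ℕ) (hn : 1 ≤ n) (z : Fin n → ℂ) (hz : z ≠ 0)
    (lam : ℝ) (hlam : lam ≠ 1) (p k i : Fin n) :
    ∑ j, ((zsq z : ℝ) : ℂ) * ((if p = j then 1 else 0)
          + (lam : ℂ) * z p * conj (z j) / ((((1 : ℝ) - lam : ℝ) : ℂ) * ((zsq z : ℝ) : ℂ)))
        * (2 * (lam : ℂ) * conj (z i) * conj (z k) * z j / ((zsq z : ℝ) : ℂ) ^ 3
          - ((lam : ℂ) * (if j = k then 1 else 0) * conj (z i)
              + (if i = j then 1 else 0) * conj (z k)) / ((zsq z : ℝ) : ℂ) ^ 2)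
      = (lam : ℂ) * conj (z i) * conj (z k) * z p / ((zsq z : ℝ) : ℂ) ^ 2
        - ((lam : ℂ) * (if p = k then 1 else 0) * conj (z i)
            + (if i = p then 1 else 0) * conj (z k)) / ((zsq z : ℝ) : ℂ) := by
  set S : ℂ := ((zsq z : ℝ) : ℂ) with hSdef
  have hSpos : 0 < zsq z := by
    have : ∃ m, z m ≠ 0 := by
      by_contra h
      push_neg at h
      exact hz (funext h)
    obtain ⟨m, hm⟩ := this
    exact Finset.sum_pos' (fun m _ => Complex.normSq_nonneg _)
      ⟨m, Finset.mem_univ m, Complex.normSq_pos.mpr hm⟩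
  have hS : S ≠ 0 := by
    simp only [hSdef, Complex.ofReal_ne_zero]
    exact ne_of_gt hSpos
  have h1 : (((1 : ℝ) - lam : ℝ) : ℂ) ≠ 0 := by
    rw [Complex.ofReal_ne_zero, sub_ne_zero]
    exact fun h => hlam h.symm
  have hsum : ∑ j, conj (z j) * z j = S := by
    rw [hSdef, zsq, Complex.ofReal_sum]
    exact Finset.sum_congr rfl fun j _ => by
      rw [Complex.normSq_eq_conj_mul_self]
  set c0 : ℂ := S * ((lam : ℂ) * z p / ((((1:ℝ) - lam : ℝ):ℂ) * S))
      * (2 * (lam:ℂ) * conj (z i) * conj (z k) / S ^ 3) with hc0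
  have hrw : ∀ j : Fin n,
      S * ((if p = j then 1 else 0)
          + (lam : ℂ) * z p * conj (z j) / ((((1 : ℝ) - lam : ℝ) : ℂ) * S))
        * (2 * (lam : ℂ) * conj (z i) * conj (z k) * z j / S ^ 3
          - ((lam : ℂ) * (if j = k then 1 else 0) * conj (z i)
              + (if i = j then 1 else 0) * conj (z k)) / S ^ 2)
      = c0 * (conj (z j) * z j)
        + (if p = j then S * (2 * (lam : ℂ) * conj (z i) * conj (z k) * z j / S ^ 3
            - ((lam : ℂ) * (if j = k then 1 else 0) * conj (z i)
              + (if i = j then 1 else 0) * conj (z k)) / S ^ 2) else 0)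
        + (if j = k then -(S * ((lam:ℂ) * z p * conj (z j) / ((((1:ℝ) - lam:ℝ):ℂ) * S))
              * ((lam:ℂ) * conj (z i) / S ^ 2)) else 0)
        + (if i = j then -(S * ((lam:ℂ) * z p * conj (z j) / ((((1:ℝ) - lam:ℝ):ℂ) * S))
              * (conj (z k) / S ^ 2)) else 0) := by
    intro j
    rw [hc0]
    split_ifs <;> ring
  rw [Finset.sum_congr rfl (fun j _ => hrw j)]
  simp only [Finset.sum_add_distrib, ← Finset.mul_sum, hsum,
    Finset.sum_ite_eq, Finset.sum_ite_eq', Finset.mem_univ, if_true]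
  rw [hc0]
  have hmu : (1 : ℂ) - (lam : ℂ) ≠ 0 := by
    intro h
    apply h1
    rw [Complex.ofReal_sub, Complex.ofReal_one, h]
  by_cases hpk : p = k <;> by_cases hip : i = p <;>
    [rw [if_pos hpk, if_pos hip]; rw [if_pos hpk, if_neg hip];
     rw [if_neg hpk, if_pos hip]; rw [if_neg hpk, if_neg hip]] <;>
  · field_simp
    push_cast
    ring
end

section
/- Let n ≥ 1 be an integer, z ∈ ℂⁿ with z ≠ 0, λ ∈ ℝ, and fix indices k,j,i,q ∈ {1,…,n}. Then Σ_{p=1}^n h_{pq̄} · R^p_{kj̄i} = R_{kj̄iq̄}(z,λ), where h_{pq̄} = (δ_{pq}|z|² − λ conj(z^p) z^q)/|z|⁴, R^p_{kj̄i} = (λ δ_{pk} δ_{ij} + δ_{ip} δ_{kj})/|z|² + 2λ conj(z^i) conj(z^k) z^p z^j/|z|⁶ − (λ(δ_{ij} conj(z^k) z^p + δ_{kj} conj(z^i) z^p + δ_{pk} conj(z^i) z^j) + δ_{ip} conj(z^k) z^j)/|z|⁴, and R_{kj̄iq̄}(z,λ) = δ_{iq}(δ_{jk}|z|² − conj(z^k)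 z^j)/|z|⁶ + λ(δ_{ij}|z|² − conj(z^i) z^j)(δ_{kq}|z|² − conj(z^k) z^q)/|z|⁸ + (λ²−2λ)·conj(z^i) z^q (δ_{kj}|z|² − conj(z^k) z^j)/|z|⁸. -/
open Finset ComplexConjugate

/-- The metric coefficients `h_{pq̄} = (δ_{pq}|z|² − λ z̄ᵖ zᑫ)/|z|⁴`. -/
noncomputable def hMet {n : ℕ} (z : Fin n → ℂ) (lam : ℝ) (p q : Fin n) : ℂ :=
  ((if p = q then ((zsq z : ℝ) : ℂ) else 0) - (lam : ℂ) * conj (z p) * z q)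
    / ((zsq z : ℝ) : ℂ) ^ 2

/-- The mixed Chern curvature `R^p_{kj̄i}` of `ω_λ`. -/
noncomputable def Rup {n : ℕ} (z : Fin n → ℂ) (lam : ℝ) (p k j i : Fin n) : ℂ :=
  ((lam : ℂ) * (if p = k then 1 else 0) * (if i = j then 1 else 0)
      + (if i = p then 1 else 0) * (if k = j then 1 else 0)) / ((zsq z : ℝ) : ℂ)
    + 2 * (lam : ℂ) * conj (z i) * conj (z k) * z p * z j / ((zsq z : ℝ) : ℂ) ^ 3
    - ((lam : ℂ) * ((if i = j then 1 else 0) * conj (z k) * z p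
          + (if k = j then 1 else 0) * conj (z i) * z p
          + (if p = k then 1 else 0) * conj (z i) * z j)
        + (if i = p then 1 else 0) * conj (z k) * z j) / ((zsq z : ℝ) : ℂ) ^ 2

/-- The lowered Chern curvature tensor `R_{kj̄iq̄}(z,λ)` of `ω_λ` (Lemma 2.1). -/
noncomputable def Rten {n : ℕ} (z : Fin n → ℂ) (lam : ℝ) (k j i q : Fin n) : ℂ :=
  (if i = q then 1 else 0)
      * ((if j = k then ((zsq z : ℝ) : ℂ) else 0) - conj (z k) * z j) / ((zsq z : ℝ) : ℂ) ^ 3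
    + (lam : ℂ) * ((if i = j then ((zsq z : ℝ) : ℂ) else 0) - conj (z i) * z j)
        * ((if k = q then ((zsq z : ℝ) : ℂ) else 0) - conj (z k) * z q) / ((zsq z : ℝ) : ℂ) ^ 4
    + ((lam ^ 2 - 2 * lam : ℝ) : ℂ) * conj (z i) * z q
        * ((if k = j then ((zsq z : ℝ) : ℂ) else 0) - conj (z k) * z j) / ((zsq z : ℝ) : ℂ) ^ 4

/-- Shorthand for `|z|²` as a complex number. -/
noncomputable def SS {n : ℕ} (z : Fin n → ℂ) : ℂ := ((zsq z : ℝ) : ℂ)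

noncomputable def Bone {n : ℕ} (z : Fin n → ℂ) (lam : ℝ) (i j : Fin n) : ℂ :=
  (lam : ℂ) * (if i = j then 1 else 0) * SS z ^ 2 - (lam : ℂ) * SS z * conj (z i) * z j

noncomputable def Btwo {n : ℕ} (z : Fin n → ℂ) (k j : Fin n) : ℂ :=
  (if k = j then 1 else 0) * SS z ^ 2 - SS z * conj (z k) * z j

noncomputable def Bthree {n : ℕ} (z : Fin n → ℂ) (lam : ℝ) (i k j : Fin n) : ℂ :=
  2 * (lam : ℂ) * conj (z i) * conj (z k) * z j
    - (lam : ℂ) * (if i = j then 1 else 0) * SS z * conj (z k)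
    - (lam : ℂ) * (if k = j then 1 else 0) * SS z * conj (z i)



/-- Lowering the index: `Σₚ h_{pq̄} · R^p_{kj̄i} = R_{kj̄iq̄}(z,λ)`. -/
theorem lower_curvature_index (n : ℕ) (hn : 1 ≤ n) (z : Fin n → ℂ) (hz : z ≠ 0)
    (lam : ℝ) (k j i q : Fin n) :
    ∑ p, hMet z lam p q * Rup z lam p k j i = Rten z lam k j i q := by
  have hS : SS z ≠ 0 := by
    rw [SS, Complex.ofReal_ne_zero]
    intro h
    apply hz
    funext m
    have h0 : ∀ m ∈ Finset.univ, (0:ℝ) ≤ Complex.normSq (z m) := fun m _ => Complex.normSq_nonneg _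
    have := (Finset.sum_eq_zero_iff_of_nonneg h0).mp h m (Finset.mem_univ m)
    simpa using Complex.normSq_eq_zero.mp this
  have h1 : SS z ^ 1 ≠ 0 := by simpa using hS
  have h2 : SS z ^ 2 ≠ 0 := pow_ne_zero _ hS
  have h3 : SS z ^ 3 ≠ 0 := pow_ne_zero _ hS
  have h4 : SS z ^ 4 ≠ 0 := pow_ne_zero _ hS
  have h5 : SS z ^ 5 ≠ 0 := pow_ne_zero _ hS
  have hsum : ∑ p, conj (z p) * z p = SS z := by
    rw [SS, zsq]
    push_cast
    exact Finset.sum_congr rfl fun m _ => by rw [← Complex.normSq_eq_conj_mul_self]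
  have expand : ∀ p, hMet z lam p q * Rup z lam p k j i =
      (((if p = q then (1:ℂ) else 0) * SS z - (lam : ℂ) * z q * conj (z p)) *
        ((if p = k then (1:ℂ) else 0) * Bone z lam i j + (if i = p then (1:ℂ) else 0) * Btwo z k j
          + Bthree z lam i k j * z p)) / SS z ^ 5 := by
    intro p
    have e1 : (if p = q then ((zsq z : ℝ) : ℂ) else 0) = (if p = q then (1:ℂ) else 0) * SS z := by
      rw [SS]; split <;> simp
    rw [hMet, Rup, e1, Bone, Btwo, Bthree]
    rw [show ((zsq z : ℝ) : ℂ) = SS z from rfl]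
    generalize (if p = q then (1:ℂ) else 0) = d1
    generalize (if p = k then (1:ℂ) else 0) = d2
    generalize (if i = p then (1:ℂ) else 0) = d3
    generalize (if i = j then (1:ℂ) else 0) = d4
    generalize (if k = j then (1:ℂ) else 0) = d5
    rw [div_add_div _ _ hS h3, div_sub_div _ _ (mul_ne_zero hS h3) h2, div_mul_div_comm,
      eq_div_iff h5, div_mul_eq_mul_div, div_eq_iff (mul_ne_zero h2 (mul_ne_zero (mul_ne_zero hS h3) h2))]
    ring
  rw [Finset.sum_congr rfl fun p _ => expand p, ← Finset.sum_div]
  have hF : ∀ p ∈ Finset.univ, (((if p = q then (1:ℂ) else 0) * SS z - (lam : ℂ) * z q * conj (z p)) *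
        ((if p = k then (1:ℂ) else 0) * Bone z lam i j + (if i = p then (1:ℂ) else 0) * Btwo z k j
          + Bthree z lam i k j * z p))
      = (if p = q then SS z * ((if p = k then (1:ℂ) else 0) * Bone z lam i j
            + (if i = p then (1:ℂ) else 0) * Btwo z k j + Bthree z lam i k j * z p) else 0)
        - (lam : ℂ) * z q * ((if p = k then conj (z p) * Bone z lam i j else 0)
            + (if i = p then conj (z p) * Btwo z k j else 0)
            + Bthree z lam i k j * (conj (z p) * z p)) := by
    intro p _
    split_ifs <;> ring
  rw [Finset.sum_congr rfl hF]
  rw [Finset.sum_sub_distrib, ← Finset.mul_sum]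
  simp only [Finset.sum_add_distrib, Finset.sum_ite_eq, Finset.sum_ite_eq', Finset.mem_univ,
    if_true, ← Finset.mul_sum, hsum]
  rw [Rten, Bone, Btwo, Bthree]
  rw [show ((zsq z : ℝ) : ℂ) = SS z from rfl]
  have c1 : (if j = k then SS z else 0) = (if k = j then (1:ℂ) else 0) * SS z := by
    by_cases h : j = k
    · simp [h]
    · simp [h, Ne.symm h]
  have c2 : (if k = q then SS z else 0) = (if k = q then (1:ℂ) else 0) * SS z := by
    split <;> simp
  have c3 : (if i = j then SS z else 0) = (if i = j then (1:ℂ) else 0) * SS z := by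
    split <;> simp
  have c4 : (if k = j then SS z else 0) = (if k = j then (1:ℂ) else 0) * SS z := by
    split <;> simp
  have c5 : (if q = k then (1:ℂ) else 0) = (if k = q then (1:ℂ) else 0) := by
    by_cases h : q = k
    · simp [h]
    · simp [h, Ne.symm h]
  simp only [c1, c2, c3, c4, c5]
  generalize (if k = j then (1:ℂ) else 0) = d1
  generalize (if k = q then (1:ℂ) else 0) = d2
  generalize (if i = j then (1:ℂ) else 0) = d3
  generalize (if i = q then (1:ℂ) else 0) = d4
  push_cast
  rw [div_add_div _ _ h3 h4, div_add_div _ _ (mul_ne_zero h3 h4) h4,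
    div_eq_div_iff h5 (mul_ne_zero (mul_ne_zero h3 h4) h4)]
  ring
end
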